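/- Let ⟨f_α : α < ω₁⟩ be a bowtie of functions with domains D_α, and let F be the associated map on subsets of ℕ. Then for every B ⊆ ℕ, setting A = f_{δ_B}^{-1}[B ∩ D_{δ_B}] ∪ (B \ D_{δ_B}), one has F(A) =* B. In particular, the map induced by F on P(ω)/Fin is surjective. -/
import Mathlib


open Set

/-- The first uncountable ordinal `ω₁`. -/
noncomputable def omega1 : Ordinal := (Cardinal.aleph 1).ord

/-- `A =* B` : the symmetric difference `(A \ B) ∪ (B \ A)` is finite. -/
def EqStar (A B : Set ℕ) : Prop := ((A \ B) ∪ (B \ A)).Finite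

/-- `A ⊆* B` : `A \ B` is finite. -/
def SubStar (A B : Set ℕ) : Prop := (A \ B).Finite

/-- A bowtie of functions: a sequence `⟨f_α : α < ω₁⟩` where each `f_α` is a
fixed-point-free permutation of a set `D_α ⊆ ℕ`, satisfying conditions
(i), (ii), (iii) of the definition.  (The functions are represented as total
functions on `ℕ`; only their behavior on `D_α` matters.) -/
structure BowtieFn where
  /-- the domains `D_α` -/
  D : Ordinal → Set ℕ
  /-- the functions `f_α` (total functions; only values on `D α` matter) -/
  f : Ordinal → ℕ → ℕ
  /-- each `f_α` is a permutation of `D_α` -/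
  bijOn : ∀ α < omega1, Set.BijOn (f α) (D α) (D α)
  /-- each `f_α` is fixed-point-free on `D_α` -/
  fixedPointFree : ∀ α < omega1, ∀ x ∈ D α, f α x ≠ x
  /-- (i) `D_α ⊆* D_β` for `α < β < ω₁` -/
  sub : ∀ α β, α < β → β < omega1 → SubStar (D α) (D β)
  /-- (i) `D_β \ D_α` is infinite for `α < β < ω₁` -/
  diff_infinite : ∀ α β, α < β → β < omega1 → (D β \ D α).Infinite
  /-- (ii) `f_α =* f_β ↾ D_α` for `α ≤ β < ω₁` -/
  coherent : ∀ α β, α ≤ β → β < omega1 → {x ∈ D α | f α x ≠ f β x}.Finite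
  /-- (iii) every `A ⊆ ℕ` has a witness `δ_A < ω₁` -/
  guess : ∀ A : Set ℕ, ∃ δ, δ < omega1 ∧ ∀ α, δ ≤ α → α < omega1 →
      EqStar (f α '' ((D α \ D δ) ∩ A)) ((D α \ D δ) ∩ A) ∧
      EqStar (f α '' ((D α \ D δ) \ A)) ((D α \ D δ) \ A)

/-- `δ` witnesses condition (iii) of the bowtie definition for the set `A`. -/
def BowtieFn.IsWitness (B : BowtieFn) (A : Set ℕ) (δ : Ordinal) : Prop :=
  δ < omega1 ∧ ∀ α, δ ≤ α → α < omega1 →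
    EqStar (B.f α '' ((B.D α \ B.D δ) ∩ A)) ((B.D α \ B.D δ) ∩ A) ∧
    EqStar (B.f α '' ((B.D α \ B.D δ) \ A)) ((B.D α \ B.D δ) \ A)

/-- `δ_A` : the least ordinal witnessing condition (iii) for `A`. -/
noncomputable def BowtieFn.delta (B : BowtieFn) (A : Set ℕ) : Ordinal :=
  sInf {δ | B.IsWitness A δ}

/-- The map `F` associated to a bowtie of functions:
`F(A) = f_{δ_A}[A ∩ D_{δ_A}] ∪ (A \ D_{δ_A})`. -/
noncomputable def BowtieFn.F (B : BowtieFn) (A : Set ℕ) : Set ℕ :=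
  B.f (B.delta A) '' (A ∩ B.D (B.delta A)) ∪ (A \ B.D (B.delta A))

/-! ### Auxiliary lemmas about `EqStar` -/

lemma eqStar_refl (A : Set ℕ) : EqStar A A := by
  simp [EqStar]

lemma eqStar_of_subset_finite {A C K : Set ℕ} (hK : K.Finite)
    (h : (A \ C ∪ C \ A) ⊆ K) : EqStar A C := hK.subset h

lemma eqStar_symm {A C : Set ℕ} (h : EqStar A C) : EqStar C A := by
  unfold EqStar at *; rwa [Set.union_comm]

lemma eqStar_trans {A C E : Set ℕ} (h1 : EqStar A C) (h2 : EqStar C E) :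
    EqStar A E := by
  apply eqStar_of_subset_finite (h1.union h2)
  intro x hx
  simp only [Set.mem_union, Set.mem_diff] at *
  tauto

lemma eqStar_union {A A' C C' : Set ℕ} (h1 : EqStar A A') (h2 : EqStar C C') :
    EqStar (A ∪ C) (A' ∪ C') := by
  apply eqStar_of_subset_finite (h1.union h2)
  intro x hx
  simp only [Set.mem_union, Set.mem_diff] at *
  tauto

lemma eqStar_image {S T : Set ℕ} {g h : ℕ → ℕ} (hST : EqStar S T)
    (hgh : {x ∈ S ∩ T | g x ≠ h x}.Finite) : EqStar (g '' S) (h '' T) := by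
  apply eqStar_of_subset_finite (((hST.union hgh).image g).union ((hST.union hgh).image h))
  rintro y (⟨⟨x, hxS, rfl⟩, hy⟩ | ⟨⟨x, hxT, rfl⟩, hy⟩)
  · refine Or.inl ⟨x, ?_, rfl⟩
    by_cases hxT : x ∈ T
    · by_cases hgx : g x = h x
      · exact absurd ⟨x, hxT, hgx.symm⟩ hy
      · exact Or.inr ⟨⟨hxS, hxT⟩, hgx⟩
    · exact Or.inl (Or.inl ⟨hxS, hxT⟩)
  · refine Or.inr ⟨x, ?_, rfl⟩
    by_cases hxS : x ∈ S
    · by_cases hgx : g x = h x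
      · exact absurd ⟨x, hxS, hgx⟩ hy
      · exact Or.inr ⟨⟨hxS, hxT⟩, hgx⟩
    · exact Or.inl (Or.inr ⟨hxT, hxS⟩)

/-- Key lemma: if `ε` witnesses condition (iii) for `A` and `ε ≤ δ < ω₁`, then
the "F-value" computed at `δ` agrees mod finite with the one computed at `ε`. -/
lemma bowtie_F_stable (B : BowtieFn) (A : Set ℕ) (ε δ : Ordinal)
    (hε : B.IsWitness A ε) (hεδ : ε ≤ δ) (hδ : δ < omega1) :
    EqStar (B.f δ '' (A ∩ B.D δ) ∪ (A \ B.D δ))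
           (B.f ε '' (A ∩ B.D ε) ∪ (A \ B.D ε)) := by
  rcases eq_or_lt_of_le hεδ with rfl | hlt
  · exact eqStar_refl _
  have hsub : (B.D ε \ B.D δ).Finite := B.sub ε δ hlt hδ
  have hcoh : {x ∈ B.D ε | B.f ε x ≠ B.f δ x}.Finite := B.coherent ε δ hεδ hδ
  have hsplit : A ∩ B.D δ = (A ∩ B.D ε ∩ B.D δ) ∪ ((B.D δ \ B.D ε) ∩ A) := by
    ext x
    simp only [Set.mem_inter_iff, Set.mem_union, Set.mem_diff]
    tauto
  have h1 : EqStar (B.f δ '' (A ∩ B.D ε ∩ B.D δ)) (B.f ε '' (A ∩ B.D ε)) := by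
    apply eqStar_image
    · apply eqStar_of_subset_finite hsub
      intro x hx
      simp only [Set.mem_union, Set.mem_diff, Set.mem_inter_iff] at *
      tauto
    · apply hcoh.subset
      rintro x ⟨⟨⟨⟨-, hx⟩, -⟩, -⟩, hne⟩
      exact ⟨hx, fun h => hne h.symm⟩
  have h2 : EqStar (B.f δ '' ((B.D δ \ B.D ε) ∩ A)) ((B.D δ \ B.D ε) ∩ A) :=
    (hε.2 δ hεδ hδ).1
  have h3 : EqStar (((B.D δ \ B.D ε) ∩ A) ∪ (A \ B.D δ)) (A \ B.D ε) := by
    apply eqStar_of_subset_finite hsub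
    intro x hx
    simp only [Set.mem_union, Set.mem_diff, Set.mem_inter_iff] at *
    tauto
  have hrw : B.f δ '' (A ∩ B.D δ) ∪ (A \ B.D δ) =
      B.f δ '' (A ∩ B.D ε ∩ B.D δ) ∪
        (B.f δ '' ((B.D δ \ B.D ε) ∩ A) ∪ (A \ B.D δ)) := by
    rw [hsplit, Set.image_union, Set.union_assoc]
  rw [hrw]
  exact eqStar_union h1 (eqStar_trans (eqStar_union h2 (eqStar_refl _)) h3)
/-- for every `C ⊆ ℕ`, with
`A = f_{δ_C}⁻¹[C ∩ D_{δ_C}] ∪ (C \ D_{δ_C})` one has `F(A) =* C`; in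
particular the induced map on `P(ω)/Fin` is surjective. -/
theorem bowtie_F_surjective (B : BowtieFn) :
    (∀ C : Set ℕ,
      EqStar (B.F ((B.D (B.delta C) ∩
        B.f (B.delta C) ⁻¹' (C ∩ B.D (B.delta C))) ∪ (C \ B.D (B.delta C)))) C) ∧
    ∀ C : Set ℕ, ∃ A : Set ℕ, EqStar (B.F A) C := by
  have main : ∀ C : Set ℕ,
      EqStar (B.F ((B.D (B.delta C) ∩
        B.f (B.delta C) ⁻¹' (C ∩ B.D (B.delta C))) ∪ (C \ B.D (B.delta C)))) C := by
    intro C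
    set δ := B.delta C with hδdef
    have hCne : {x | B.IsWitness C x}.Nonempty := by
      obtain ⟨d, hd1, hd2⟩ := B.guess C
      exact ⟨d, hd1, hd2⟩
    have hwC : B.IsWitness C δ := csInf_mem hCne
    have hδ : δ < omega1 := hwC.1
    set A := (B.D δ ∩ B.f δ ⁻¹' (C ∩ B.D δ)) ∪ (C \ B.D δ) with hAdef
    -- outside D δ, A agrees with C
    have hout : ∀ x, x ∉ B.D δ → (x ∈ A ↔ x ∈ C) := by
      intro x hx
      simp only [hAdef, Set.mem_union, Set.mem_inter_iff, Set.mem_diff]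
      tauto
    -- δ witnesses (iii) for A
    have hwA : B.IsWitness A δ := by
      refine ⟨hδ, fun α hle hα => ?_⟩
      have e1 : (B.D α \ B.D δ) ∩ A = (B.D α \ B.D δ) ∩ C := by
        ext x
        simp only [Set.mem_inter_iff, Set.mem_diff]
        constructor
        · rintro ⟨⟨h1, h2⟩, h3⟩; exact ⟨⟨h1, h2⟩, (hout x h2).1 h3⟩
        · rintro ⟨⟨h1, h2⟩, h3⟩; exact ⟨⟨h1, h2⟩, (hout x h2).2 h3⟩
      have e2 : (B.D α \ B.D δ) \ A = (B.D α \ B.D δ) \ C := by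
        ext x
        simp only [Set.mem_diff]
        constructor
        · rintro ⟨⟨h1, h2⟩, h3⟩; exact ⟨⟨h1, h2⟩, fun hc => h3 ((hout x h2).2 hc)⟩
        · rintro ⟨⟨h1, h2⟩, h3⟩; exact ⟨⟨h1, h2⟩, fun hc => h3 ((hout x h2).1 hc)⟩
      rw [e1, e2]
      exact hwC.2 α hle hα
    have hmemA : δ ∈ {d | B.IsWitness A d} := hwA
    have hε : B.IsWitness A (B.delta A) := csInf_mem ⟨δ, hmemA⟩
    have hεδ : B.delta A ≤ δ := csInf_le' hmemA
    -- the F-value computed at δ equals C exactly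
    have hbij : Set.BijOn (B.f δ) (B.D δ) (B.D δ) := B.bijOn δ hδ
    have hAD : A ∩ B.D δ = B.D δ ∩ B.f δ ⁻¹' (C ∩ B.D δ) := by
      ext x
      simp only [hAdef, Set.mem_inter_iff, Set.mem_union, Set.mem_diff,
        Set.mem_preimage]
      tauto
    have himg : B.f δ '' (A ∩ B.D δ) = C ∩ B.D δ := by
      rw [hAD]
      apply Set.Subset.antisymm
      · rintro y ⟨x, ⟨-, hx2⟩, rfl⟩; exact hx2
      · rintro y hy
        obtain ⟨x, hx, rfl⟩ := hbij.surjOn hy.2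
        exact ⟨x, ⟨hx, hy⟩, rfl⟩
    have hdiff : A \ B.D δ = C \ B.D δ := by
      ext x
      simp only [Set.mem_diff]
      exact ⟨fun ⟨h1, h2⟩ => ⟨(hout x h2).1 h1, h2⟩,
        fun ⟨h1, h2⟩ => ⟨(hout x h2).2 h1, h2⟩⟩
    have hexact : B.f δ '' (A ∩ B.D δ) ∪ (A \ B.D δ) = C := by
      rw [himg, hdiff, Set.inter_union_diff]
    have := bowtie_F_stable B A (B.delta A) δ hε hεδ hδ
    rw [hexact] at this
    exact eqStar_symm this
  exact ⟨main, fun C => ⟨_, main C⟩⟩
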